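/- With the setup of the iterative scheme f(a) = (d + √(d² + σ²(2λ + 2q − 2λ α((a − 2d/σ²)I − T)^{-1} t)))/σ² on (2d/σ², ∞): any monotone sequence a_{n} = f(a_{n-1}) starting from a_0 > 2d/σ² is bounded (it satisfies max(2d/σ²,0) < a_n < (d + √(d² + 2σ²(λ+q)))/σ² for n ≥ 1) and hence converges to a fixed point of f. -/

import Mathlib

open Matrix

open Filter Topology

/-!
For `s > 0` and a sub-generator `T` (nonnegative off-diagonal entries, nonpositive row sums),
`s • 1 - T` obeys a minimum principle: `(s • 1 - T) x ≥ 0` forces `x ≥ 0`, and `> 0` forces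
`x > 0`. Hence `w = (s • 1 - T)⁻¹ 1 > 0` and `u = (s • 1 - T)⁻¹ t ≥ 0`; the zero set of `u` would
be a closed class on which `T` is conservative, which would make `T` singular, so `u > 0`. As
`u = 1 - s w`, the Laplace transform `α u` lies in `(0, 1)`, which puts the radicand in the
definition of `f` strictly between `d²` and `d² + 2σ²(λ + q)` and gives the bounds. So the
monotone sequence converges; since `s • 1 - T` stays invertible for `s ≥ 0`, `f` is continuous on
`[2d/σ², ∞)` and the limit is a fixed point.
-/

structure Matrix.IsSubgenerator {ι : Type*} [Fintype ι] (T : Matrix ι ι ℝ) : Prop where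
  off_diag_nonneg : ∀ i j, i ≠ j → 0 ≤ T i j
  row_sum_nonpos : ∀ i, ∑ j, T i j ≤ 0

namespace Matrix

variable {ι : Type*} [Fintype ι]

lemma IsSubgenerator.neg_mulVec_one_nonneg {T : Matrix ι ι ℝ} (hT : T.IsSubgenerator) (i : ι) :
    0 ≤ ((-T) *ᵥ 1) i := by
  simpa [mulVec, dotProduct] using hT.row_sum_nonpos i

variable [DecidableEq ι]

lemma det_ne_zero_of_zero_notMem_spectrum {A : Matrix ι ι ℝ}
    (h : (0 : ℂ) ∉ spectrum ℂ (A.map Complex.ofReal)) : A.det ≠ 0 := by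
  rw [spectrum.zero_mem_iff, not_not, isUnit_iff_isUnit_det] at h
  intro hA
  have : (A.map Complex.ofReal).det = 0 := by
    have := (RingHom.map_det Complex.ofRealHom A).symm
    rwa [hA, map_zero] at this
  exact not_isUnit_zero (this ▸ h)

lemma det_eq_zero_of_closed {R : Type*} [CommRing R] [IsDomain R] (T : Matrix ι ι R)
    (p : ι → Prop) [DecidablePred p] (hp : ∃ i, p i)
    (hclosed : ∀ i, p i → ∀ j, ¬p j → T i j = 0) (hrow : ∀ i, p i → ∑ j, T i j = 0) :
    T.det = 0 := by
  have hblock : toSquareBlockProp T p *ᵥ 1 = 0 := by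
    funext i
    have hout : ∑ j : {j // ¬p j}, T i j = 0 :=
      Finset.sum_eq_zero fun j _ => hclosed i i.2 j j.2
    have := Fintype.sum_subtype_add_sum_subtype p (T i)
    simp only [mulVec, dotProduct, toSquareBlockProp_def, of_apply, Pi.one_apply, mul_one,
      Pi.zero_apply]
    rw [hout, add_zero, hrow i i.2] at this
    exact this
  obtain ⟨i, hi⟩ := hp
  have hone : (1 : {j // p j} → R) ≠ 0 := fun h => one_ne_zero (congrFun h ⟨i, hi⟩)
  rw [twoBlockTriangular_det' T p hclosed, exists_mulVec_eq_zero_iff.mp ⟨1, hone, hblock⟩,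
    zero_mul]

lemma smul_one_sub_mulVec_apply {R : Type*} [CommRing R] (T : Matrix ι ι R) (s : R)
    (x : ι → R) (i : ι) : ((s • 1 - T) *ᵥ x) i = s * x i - ∑ j, T i j * x j := by
  rw [sub_mulVec, smul_mulVec, one_mulVec]
  rfl

lemma inv_mulVec_neg_mulVec_one {R : Type*} [CommRing R] {T : Matrix ι ι R} {s : R}
    (h : IsUnit (s • 1 - T).det) :
    (s • 1 - T)⁻¹ *ᵥ ((-T) *ᵥ 1) = 1 - s • ((s • 1 - T)⁻¹ *ᵥ 1) := by
  have : (-T) *ᵥ 1 = (s • 1 - T) *ᵥ 1 - s • 1 := by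
    rw [sub_mulVec, smul_mulVec, one_mulVec, neg_mulVec]; abel
  rw [this, mulVec_sub, mulVec_mulVec, nonsing_inv_mul _ h, one_mulVec, mulVec_smul]

namespace IsSubgenerator

variable {T : Matrix ι ι ℝ}

lemma smul_one_sub_mulVec_apply_le (hT : T.IsSubgenerator) (s : ℝ) {x : ι → ℝ} {i : ι}
    (hmin : ∀ j, x i ≤ x j) (hxi : x i ≤ 0) : ((s • 1 - T) *ᵥ x) i ≤ s * x i := by
  have hsum : (∑ j, T i j) * x i ≤ ∑ j, T i j * x j := by
    rw [Finset.sum_mul]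
    refine Finset.sum_le_sum fun j _ => ?_
    rcases eq_or_ne i j with rfl | hij
    · rfl
    · exact mul_le_mul_of_nonneg_left (hmin j) (hT.off_diag_nonneg i j hij)
  have := mul_nonneg_of_nonpos_of_nonpos (hT.row_sum_nonpos i) hxi
  rw [smul_one_sub_mulVec_apply]
  linarith

lemma nonneg_of_smul_one_sub_mulVec_nonneg (hT : T.IsSubgenerator) {s : ℝ} (hs : 0 < s)
    {x : ι → ℝ} (h : ∀ i, 0 ≤ ((s • 1 - T) *ᵥ x) i) (i : ι) : 0 ≤ x i := by
  have : Nonempty ι := ⟨i⟩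
  obtain ⟨i₀, hmin⟩ := Finite.exists_min x
  by_contra! hi
  have hi₀ : x i₀ < 0 := (hmin i).trans_lt hi
  have := hT.smul_one_sub_mulVec_apply_le s hmin hi₀.le
  nlinarith [h i₀]

lemma pos_of_smul_one_sub_mulVec_pos (hT : T.IsSubgenerator) {s : ℝ} (hs : 0 < s)
    {x : ι → ℝ} (h : ∀ i, 0 < ((s • 1 - T) *ᵥ x) i) (i : ι) : 0 < x i := by
  have : Nonempty ι := ⟨i⟩
  obtain ⟨i₀, hmin⟩ := Finite.exists_min x
  by_contra! hi
  have hi₀ : x i₀ ≤ 0 := (hmin i).trans hi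
  have := hT.smul_one_sub_mulVec_apply_le s hmin hi₀
  nlinarith [h i₀]

lemma det_smul_one_sub_ne_zero (hT : T.IsSubgenerator) {s : ℝ} (hs : 0 < s) :
    (s • 1 - T).det ≠ 0 := by
  intro h
  obtain ⟨v, hv, hMv⟩ := exists_mulVec_eq_zero_iff.mpr h
  refine hv (funext fun i => le_antisymm ?_ ?_)
  · have := hT.nonneg_of_smul_one_sub_mulVec_nonneg hs (x := -v) (by simp [mulVec_neg, hMv]) i
    simpa using this
  · exact hT.nonneg_of_smul_one_sub_mulVec_nonneg hs (by simp [hMv]) i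

lemma det_smul_one_sub_ne_zero_of_nonneg (hT : T.IsSubgenerator) (hdet : T.det ≠ 0) {s : ℝ}
    (hs : 0 ≤ s) : (s • 1 - T).det ≠ 0 := by
  rcases hs.eq_or_lt with rfl | hs
  · simpa [det_neg] using hdet
  · exact hT.det_smul_one_sub_ne_zero hs

lemma inv_mulVec_neg_mulVec_one_pos (hT : T.IsSubgenerator) (hdet : T.det ≠ 0) {s : ℝ}
    (hs : 0 < s) (i : ι) : 0 < ((s • 1 - T)⁻¹ *ᵥ ((-T) *ᵥ 1)) i := by
  set u := (s • 1 - T)⁻¹ *ᵥ ((-T) *ᵥ 1)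
  have hMu : (s • 1 - T) *ᵥ u = (-T) *ᵥ 1 := by
    rw [mulVec_mulVec, mul_nonsing_inv _ (hT.det_smul_one_sub_ne_zero hs).isUnit, one_mulVec]
  have hu : ∀ j, 0 ≤ u j :=
    hT.nonneg_of_smul_one_sub_mulVec_nonneg hs fun j => hMu ▸ hT.neg_mulVec_one_nonneg j
  -- At a zero `i` of `u`, row `i` of `(s • 1 - T) u = -T 1` equates a sum of nonnegative terms
  -- `T i j * u j` with the nonpositive row sum.
  have hclosed : ∀ i, u i = 0 → (∀ j, u j ≠ 0 → T i j = 0) ∧ ∑ j, T i j = 0 := by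
    intro i hi
    have hrow : ∑ j, T i j * u j = ∑ j, T i j := by
      have := congrFun hMu i
      rw [smul_one_sub_mulVec_apply, hi] at this
      simpa [mulVec, dotProduct] using this
    have hterm : ∀ j, 0 ≤ T i j * u j := fun j => by
      rcases eq_or_ne i j with rfl | hij
      · simp [hi]
      · exact mul_nonneg (hT.off_diag_nonneg i j hij) (hu j)
    have hzero : ∑ j, T i j * u j = 0 :=
      le_antisymm (hrow ▸ hT.row_sum_nonpos i) (Finset.sum_nonneg fun j _ => hterm j)
    refine ⟨fun j hj => ?_, hrow ▸ hzero⟩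
    have := (Finset.sum_eq_zero_iff_of_nonneg fun j _ => hterm j).mp hzero j (Finset.mem_univ j)
    exact (mul_eq_zero.mp this).resolve_right hj
  exact (hu i).lt_of_ne fun hi => hdet <| det_eq_zero_of_closed T (u · = 0) ⟨i, hi.symm⟩
    (fun i hi => (hclosed i hi).1) fun i hi => (hclosed i hi).2

lemma inv_mulVec_one_pos (hT : T.IsSubgenerator) {s : ℝ} (hs : 0 < s) (i : ι) :
    0 < ((s • 1 - T)⁻¹ *ᵥ 1) i := by
  refine hT.pos_of_smul_one_sub_mulVec_pos hs (fun j => ?_) i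
  rw [mulVec_mulVec, mul_nonsing_inv _ (hT.det_smul_one_sub_ne_zero hs).isUnit, one_mulVec]
  exact one_pos

end IsSubgenerator

end Matrix

lemma dotProduct_pos_of_sum_eq_one {ι : Type*} [Fintype ι] {α v : ι → ℝ} (hα0 : ∀ i, 0 ≤ α i)
    (hα1 : ∑ i, α i = 1) (hv : ∀ i, 0 < v i) : 0 < α ⬝ᵥ v := by
  obtain ⟨i, -, hi⟩ := Finset.exists_ne_zero_of_sum_ne_zero (hα1 ▸ one_ne_zero)
  exact Finset.sum_pos' (fun j _ => mul_nonneg (hα0 j) (hv j).le)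
    ⟨i, Finset.mem_univ i, mul_pos ((hα0 i).lt_of_ne' hi) (hv i)⟩

section PhaseType

variable {ι : Type*} [Fintype ι] [DecidableEq ι]

noncomputable def phaseTypeLaplace (α : ι → ℝ) (T : Matrix ι ι ℝ) (s : ℝ) : ℝ :=
  vecMul α (s • 1 - T)⁻¹ ⬝ᵥ ((-T) *ᵥ 1)

variable {α : ι → ℝ} {T : Matrix ι ι ℝ}

lemma phaseTypeLaplace_mem_Ioo (hT : T.IsSubgenerator) (hdet : T.det ≠ 0)
    (hα0 : ∀ i, 0 ≤ α i) (hα1 : ∑ i, α i = 1) {s : ℝ} (hs : 0 < s) :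
    phaseTypeLaplace α T s ∈ Set.Ioo 0 1 := by
  rw [phaseTypeLaplace, ← dotProduct_mulVec]
  refine ⟨dotProduct_pos_of_sum_eq_one hα0 hα1 (hT.inv_mulVec_neg_mulVec_one_pos hdet hs), ?_⟩
  have := dotProduct_pos_of_sum_eq_one hα0 hα1 (hT.inv_mulVec_one_pos hs)
  rw [inv_mulVec_neg_mulVec_one (hT.det_smul_one_sub_ne_zero hs).isUnit, dotProduct_sub,
    dotProduct_one, hα1, dotProduct_smul, smul_eq_mul]
  nlinarith

lemma continuousAt_phaseTypeLaplace {s : ℝ} (hs : (s • 1 - T).det ≠ 0) :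
    ContinuousAt (phaseTypeLaplace α T) s := by
  have hinv : ContinuousAt (fun s : ℝ => (s • 1 - T)⁻¹) s :=
    (continuousAt_matrix_inv _ (by rw [Ring.inverse_eq_inv']; exact continuousAt_inv₀ hs)).comp
      (by fun_prop)
  exact ((continuous_const.matrix_vecMul continuous_id).dotProduct
    continuous_const).continuousAt.comp hinv

end PhaseType

-- `(d + √(d ^ 2 + k * r)) / k` is the larger root of `k y ^ 2 - 2 d y - r`.
section Root

variable {k d r r' : ℝ}

lemma max_lt_root (hk : 0 < k) (hr : 0 < r) : max (2 * d / k) 0 < (d + √(d ^ 2 + k * r)) / k := by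
  have habs : |d| < √(d ^ 2 + k * r) := by
    rw [← Real.sqrt_sq_eq_abs]
    exact Real.sqrt_lt_sqrt (sq_nonneg d) (by nlinarith)
  rw [max_lt_iff, div_lt_div_iff_of_pos_right hk, lt_div_iff₀ hk, zero_mul]
  constructor <;> linarith [le_abs_self d, neg_abs_le d]

lemma root_lt_root (hk : 0 < k) (hr : 0 ≤ r) (hrr' : r < r') :
    (d + √(d ^ 2 + k * r)) / k < (d + √(d ^ 2 + k * r')) / k := by
  gcongr

end Root

lemma eq_iterate_of_forall_succ {α : Type*} {f : α → α} {a : ℕ → α}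
    (hrec : ∀ m, a (m + 1) = f (a m)) : a = fun m => f^[m] (a 0) := by
  funext m
  induction m with
  | zero => rfl
  | succ m ih => rw [hrec, ih, Function.iterate_succ_apply']

section Iteration

open Set Function

variable {f : ℝ → ℝ} {c lo hi x : ℝ}

lemma iterate_mem_Ioi (hmaps : MapsTo f (Ioi c) (Ioo lo hi)) (hlo : c ≤ lo) (hx : c < x)
    (m : ℕ) : f^[m] x ∈ Ioi c :=
  (hmaps.mono_right (Ioo_subset_Ioi_self.trans (Ioi_subset_Ioi hlo))).iterate m hx

lemma iterate_succ_mem_Ioo (hmaps : MapsTo f (Ioi c) (Ioo lo hi)) (hlo : c ≤ lo) (hx : c < x)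
    (m : ℕ) : f^[m + 1] x ∈ Ioo lo hi := by
  rw [iterate_succ_apply']
  exact hmaps (iterate_mem_Ioi hmaps hlo hx m)

lemma exists_tendsto_iterate_isFixedPt (hmaps : MapsTo f (Ioi c) (Ioo lo hi)) (hlo : c ≤ lo)
    (hcont : ∀ y, c ≤ y → ContinuousAt f y) (hx : c < x)
    (hmono : Monotone (f^[·] x) ∨ Antitone (f^[·] x)) :
    ∃ L, Tendsto (f^[·] x) atTop (𝓝 L) ∧ IsFixedPt f L := by
  have hbdd : Bornology.IsBounded (range (f^[·] x)) := by
    refine (Metric.isBounded_Ioo lo hi).insert x |>.subset ?_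
    rintro _ ⟨_ | m, rfl⟩
    · exact mem_insert x _
    · exact mem_insert_of_mem x (iterate_succ_mem_Ioo hmaps hlo hx m)
  obtain ⟨L, hL⟩ : ∃ L, Tendsto (f^[·] x) atTop (𝓝 L) := by
    rcases hmono with hmono | hanti
    · exact ⟨_, tendsto_atTop_ciSup hmono hbdd.bddAbove⟩
    · exact ⟨_, tendsto_atTop_ciInf hanti hbdd.bddBelow⟩
  have hcL : c ≤ L := ge_of_tendsto' hL fun m => (iterate_mem_Ioi hmaps hlo hx m).le
  exact ⟨L, hL, isFixedPt_of_tendsto_iterate hL (hcont L hcL)⟩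

end Iteration

theorem stmt8 (n : ℕ) (σ lam d q : ℝ) (hσ : 0 < σ) (hlam : 0 < lam) (hq : 0 ≤ q)
    (T : Matrix (Fin n) (Fin n) ℝ)
    (hoff : ∀ i j, i ≠ j → 0 ≤ T i j) (hrow : ∀ i, ∑ j, T i j ≤ 0)
    (heig : ∀ μ ∈ spectrum ℂ (T.map (Complex.ofReal : ℝ → ℂ)), μ.re < 0)
    (α : Fin n → ℝ) (hα0 : ∀ i, 0 ≤ α i) (hα1 : ∑ i, α i = 1)
    (t : Fin n → ℝ) (ht : t = (-T).mulVec 1)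
    (f : ℝ → ℝ)
    (hf : ∀ x : ℝ, f x =
      (d + Real.sqrt (d ^ 2 + σ ^ 2 * (2 * lam + 2 * q -
        2 * lam * (Matrix.vecMul α
          ((x - 2 * d / σ ^ 2) • (1 : Matrix (Fin n) (Fin n) ℝ) - T)⁻¹ ⬝ᵥ t)))) / σ ^ 2)
    (a : ℕ → ℝ) (ha0 : a 0 > 2 * d / σ ^ 2)
    (hrec : ∀ m : ℕ, a (m + 1) = f (a m))
    (hmono : Monotone a ∨ Antitone a) :
    (∀ m : ℕ, 1 ≤ m → max (2 * d / σ ^ 2) 0 < a m ∧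
      a m < (d + Real.sqrt (d ^ 2 + 2 * σ ^ 2 * (lam + q))) / σ ^ 2) ∧
    ∃ L : ℝ, Tendsto a atTop (𝓝 L) ∧ f L = L := by
  subst ht
  have hT : T.IsSubgenerator := ⟨hoff, hrow⟩
  have hdet : T.det ≠ 0 := det_ne_zero_of_zero_notMem_spectrum fun h => by simpa using heig 0 h
  set c := 2 * d / σ ^ 2
  have hf' : f = fun x => (d + √(d ^ 2 + σ ^ 2 * (2 * lam + 2 * q -
      2 * lam * phaseTypeLaplace α T (x - c)))) / σ ^ 2 := funext hf
  have hmaps : Set.MapsTo f (Set.Ioi c)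
      (Set.Ioo (max c 0) ((d + √(d ^ 2 + 2 * σ ^ 2 * (lam + q))) / σ ^ 2)) := by
    intro x hx
    obtain ⟨hG0, hG1⟩ := phaseTypeLaplace_mem_Ioo hT hdet hα0 hα1 (sub_pos.2 hx)
    rw [hf', show 2 * σ ^ 2 * (lam + q) = σ ^ 2 * (2 * lam + 2 * q) by ring]
    exact ⟨max_lt_root (by positivity) (by nlinarith),
      root_lt_root (by positivity) (by nlinarith) (by nlinarith)⟩
  have hcont : ∀ x, c ≤ x → ContinuousAt f x := fun x hx => by
    have := continuousAt_phaseTypeLaplace (α := α)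
      (hT.det_smul_one_sub_ne_zero_of_nonneg hdet (sub_nonneg.2 hx))
    rw [hf']
    fun_prop
  rw [eq_iterate_of_forall_succ hrec] at hmono ⊢
  refine ⟨fun m hm => ?_,
    exists_tendsto_iterate_isFixedPt hmaps (le_max_left c 0) hcont ha0 hmono⟩
  obtain ⟨m, rfl⟩ := Nat.exists_eq_add_of_le' hm
  exact iterate_succ_mem_Ioo hmaps (le_max_left c 0) ha0 m
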